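/- Fix constants C₁, C'₁ > 0, an integer q̄ ≥ 1, T > 0, and σ, η, k > 0. Let B be the (2q̄+1)×(2q̄+1) tridiagonal matrix indexed by q ∈ {−q̄,…,q̄} with B_{q,q} = −C₁ q², B_{q,q±1} = C'₁ and zeros elsewhere, set u(t,q) := (e^{(T−t)B}·𝟏)_q and v(t,q) := −u(t,q)^{−ση/k}. Then for all t ∈ [0,T] and all q ∈ {−q̄,…,q̄−1}: (1/η)·| log( v(t,q) / v(t,q+1) ) | ≤ (σ/k)·(2C'₁ + C₁ q̄²)·T. -/

import Mathlib

/-! Adding `C₁ q̄²` to the diagonal of `B` makes it entrywise nonnegative with row sums at most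
`C₁ q̄² + 2C'₁`, so the exponential series puts every entry of `e^{s(B + C₁q̄²)}𝟏` in
`[1, e^{s(C₁q̄² + 2C'₁)}]`. Hence `e^{-C₁q̄² s} ≤ u(t, q) ≤ e^{2C'₁ s}` with `s = T - t`, and
`log (v(t,q) / v(t,q+1)) = (ση/k) (log u(t,q+1) - log u(t,q))` is at most
`(ση/k)(2C'₁ + C₁q̄²) s` in absolute value. -/

open Matrix NormedSpace

open scoped Nat

section ExpBounds

variable {n : Type*} [Fintype n] [DecidableEq n]

theorem Matrix.hasSum_exp_mulVec_apply (M : Matrix n n ℝ) (v : n → ℝ) (i : n) :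
    HasSum (fun m => (M ^ m *ᵥ v) i / m !) ((exp M *ᵥ v) i) := by
  let _ : NormedRing (Matrix n n ℝ) := Matrix.linftyOpNormedRing
  let _ : NormedAlgebra ℝ (Matrix n n ℝ) := Matrix.linftyOpNormedAlgebra
  have hentry : ∀ j, HasSum (fun m => (m ! : ℝ)⁻¹ * (M ^ m) i j) (exp M i j) := fun j =>
    Pi.hasSum.1 (Pi.hasSum.1 (exp_series_hasSum_exp' (𝕂 := ℝ) M) i) j
  have hterms : (fun m => (M ^ m *ᵥ v) i / m !) =
      fun m => ∑ j, (m ! : ℝ)⁻¹ * (M ^ m) i j * v j := by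
    funext m
    simp only [mulVec, dotProduct, Finset.sum_div]
    exact Finset.sum_congr rfl fun j _ => by ring
  rw [hterms]
  exact hasSum_sum fun j _ => (hentry j).mul_right (v j)

theorem Matrix.pow_mulVec_one_apply_le {M : Matrix n n ℝ} (hM : ∀ i j, 0 ≤ M i j) {r : ℝ}
    (hr0 : 0 ≤ r) (hr : ∀ i, ∑ j, M i j ≤ r) (m : ℕ) (i : n) :
    (M ^ m *ᵥ 1) i ≤ r ^ m := by
  induction m generalizing i with
  | zero => simp
  | succ m ih =>
    rw [pow_succ', ← mulVec_mulVec]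
    calc (M *ᵥ (M ^ m *ᵥ 1)) i = ∑ j, M i j * (M ^ m *ᵥ 1) j := rfl
      _ ≤ ∑ j, M i j * r ^ m := by gcongr with j; exact hM i j; exact ih j
      _ = (∑ j, M i j) * r ^ m := (Finset.sum_mul ..).symm
      _ ≤ r * r ^ m := by gcongr; exact hr i
      _ = r ^ (m + 1) := (pow_succ' r m).symm

theorem Matrix.exp_mulVec_one_apply_mem_Icc {M : Matrix n n ℝ} (hM : ∀ i j, 0 ≤ M i j) {r : ℝ}
    (hr : ∀ i, ∑ j, M i j ≤ r) (i : n) :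
    (exp M *ᵥ 1) i ∈ Set.Icc 1 (Real.exp r) := by
  have hr0 : 0 ≤ r := (Finset.sum_nonneg fun j _ => hM i j).trans (hr i)
  have hsum := M.hasSum_exp_mulVec_apply 1 i
  have hterm : ∀ m, 0 ≤ (M ^ m *ᵥ 1) i / m ! := fun m =>
    div_nonneg (Finset.sum_nonneg fun j _ => by simpa using pow_apply_nonneg hM m i j)
      (Nat.cast_nonneg _)
  constructor
  · simpa using le_hasSum hsum 0 fun m _ => hterm m
  · refine hasSum_le (fun m => ?_) hsum (Real.exp_eq_exp_ℝ ▸ expSeries_div_hasSum_exp r)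
    gcongr
    exact pow_mulVec_one_apply_le hM hr0 hr m i

theorem Matrix.exp_eq_smul_exp_add_algebraMap (X : Matrix n n ℝ) (c : ℝ) :
    exp X = Real.exp (-c) • exp (X + algebraMap ℝ _ c) := by
  let _ : NormedRing (Matrix n n ℝ) := Matrix.linftyOpNormedRing
  let _ : NormedAlgebra ℝ (Matrix n n ℝ) := Matrix.linftyOpNormedAlgebra
  have hsplit : X = (X + algebraMap ℝ _ c) + algebraMap ℝ _ (-c) := by
    rw [map_neg]; abel
  have hscalar : exp (algebraMap ℝ (Matrix n n ℝ) (-c)) = Real.exp (-c) • 1 := by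
    rw [Real.exp_eq_exp_ℝ, ← Algebra.algebraMap_eq_smul_one]
    exact (algebraMap_exp_comm (-c)).symm
  conv_lhs => rw [hsplit, exp_add_of_commute _ _ (Algebra.commute_algebraMap_right _ _), hscalar,
    mul_smul_one]

theorem Matrix.exp_smul_mulVec_one_apply_mem_Icc {A : Matrix n n ℝ} {c ρ s : ℝ}
    (hoff : ∀ i j, i ≠ j → 0 ≤ A i j) (hdiag : ∀ i, -c ≤ A i i) (hrow : ∀ i, ∑ j, A i j ≤ ρ)
    (hs : 0 ≤ s) (i : n) :
    (exp (s • A) *ᵥ 1) i ∈ Set.Icc (Real.exp (-(c * s))) (Real.exp (ρ * s)) := by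
  set M := s • A + algebraMap ℝ _ (c * s)
  have hM : ∀ i j, 0 ≤ M i j := by
    intro i j
    by_cases hij : i = j
    · subst hij
      simp only [M, add_apply, smul_apply, algebraMap_matrix_apply, Algebra.algebraMap_self_apply,
        if_pos, smul_eq_mul]
      nlinarith [hdiag i]
    · simp only [M, add_apply, smul_apply, algebraMap_matrix_apply, if_neg hij, smul_eq_mul,
        add_zero]
      exact mul_nonneg hs (hoff i j hij)
  have hrowM : ∀ i, ∑ j, M i j ≤ (ρ + c) * s := by
    intro i
    simp only [M, add_apply, smul_apply, algebraMap_matrix_apply, Algebra.algebraMap_self_apply,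
      Finset.sum_add_distrib, Finset.sum_ite_eq, Finset.mem_univ, if_true, smul_eq_mul,
      ← Finset.mul_sum]
    nlinarith [hrow i]
  obtain ⟨hlow, hupp⟩ := exp_mulVec_one_apply_mem_Icc hM hrowM i
  rw [exp_eq_smul_exp_add_algebraMap (s • A) (c * s), smul_mulVec, Pi.smul_apply, smul_eq_mul]
  constructor
  · exact le_mul_of_one_le_right (Real.exp_pos _).le hlow
  · calc Real.exp (-(c * s)) * (exp M *ᵥ 1) i ≤ Real.exp (-(c * s)) * Real.exp ((ρ + c) * s) := by
          gcongr
      _ = Real.exp (ρ * s) := by rw [← Real.exp_add]; ring_nf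

end ExpBounds

theorem Fintype.sum_ite_eq_le_of_injective {ι α : Type*} [Fintype ι] [DecidableEq α] {f : ι → α}
    (hf : Function.Injective f) (a : α) {b : ℝ} (hb : 0 ≤ b) :
    ∑ j, (if f j = a then b else 0) ≤ b := by
  by_cases ha : ∃ j₀, f j₀ = a
  · obtain ⟨j₀, rfl⟩ := ha
    classical
    simp_rw [hf.eq_iff]
    simp
  · push Not at ha
    simp [ha, hb]

def symmTridiagonal {n : ℕ} (d : Fin n → ℝ) (b : ℝ) : Matrix (Fin n) (Fin n) ℝ := fun i j =>
  if i = j then d i else if (i : ℕ) + 1 = (j : ℕ) ∨ (j : ℕ) + 1 = (i : ℕ) then b else 0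

section SymmTridiagonal

variable {n : ℕ} {d : Fin n → ℝ} {b : ℝ}

theorem symmTridiagonal_apply_self (d : Fin n → ℝ) (b : ℝ) (i : Fin n) :
    symmTridiagonal d b i i = d i := if_pos rfl

theorem symmTridiagonal_apply_nonneg_of_ne (hb : 0 ≤ b) {i j : Fin n} (hij : i ≠ j) :
    0 ≤ symmTridiagonal d b i j := by
  simp only [symmTridiagonal, if_neg hij]
  split_ifs <;> simp [hb]

theorem sum_symmTridiagonal_apply_le (hd : ∀ i, d i ≤ 0) (hb : 0 ≤ b) (i : Fin n) :
    ∑ j, symmTridiagonal d b i j ≤ 2 * b := by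
  have hentry : ∀ j, symmTridiagonal d b i j ≤
      (if (j : ℕ) = i + 1 then b else 0) + (if (j : ℕ) + 1 = i then b else 0) := by
    intro j
    simp only [symmTridiagonal]
    split_ifs <;> first | omega | linarith [hd i]
  calc ∑ j, symmTridiagonal d b i j
      ≤ ∑ j : Fin n, ((if (j : ℕ) = i + 1 then b else 0) + (if (j : ℕ) + 1 = i then b else 0)) :=
        Finset.sum_le_sum fun j _ => hentry j
    _ ≤ b + b := by
        rw [Finset.sum_add_distrib]
        exact add_le_add (Fintype.sum_ite_eq_le_of_injective Fin.val_injective _ hb)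
          (Fintype.sum_ite_eq_le_of_injective ((add_left_injective 1).comp Fin.val_injective) _ hb)
    _ = 2 * b := by ring

end SymmTridiagonal

theorem log_mem_Icc_of_mem_Icc_exp {x a b : ℝ} (hx : x ∈ Set.Icc (Real.exp a) (Real.exp b)) :
    Real.log x ∈ Set.Icc a b := by
  have hx0 : 0 < x := (Real.exp_pos a).trans_le hx.1
  constructor
  · simpa using Real.log_le_log (Real.exp_pos a) hx.1
  · simpa using Real.log_le_log hx0 hx.2

theorem abs_log_neg_rpow_div_neg_rpow_le {x y a b α : ℝ} (hα : 0 ≤ α)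
    (hx : x ∈ Set.Icc (Real.exp (-a)) (Real.exp b))
    (hy : y ∈ Set.Icc (Real.exp (-a)) (Real.exp b)) :
    |Real.log (-x ^ (-α) / -y ^ (-α))| ≤ α * (a + b) := by
  have hx0 : 0 < x := (Real.exp_pos _).trans_le hx.1
  have hy0 : 0 < y := (Real.exp_pos _).trans_le hy.1
  have hlog : Real.log (-x ^ (-α) / -y ^ (-α)) = α * (Real.log y - Real.log x) := by
    rw [neg_div_neg_eq, Real.log_div (Real.rpow_pos_of_pos hx0 _).ne'
      (Real.rpow_pos_of_pos hy0 _).ne', Real.log_rpow hx0, Real.log_rpow hy0]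
    ring
  obtain ⟨hxa, hxb⟩ := log_mem_Icc_of_mem_Icc_exp hx
  obtain ⟨hya, hyb⟩ := log_mem_Icc_of_mem_Icc_exp hy
  rw [hlog, abs_mul, abs_of_nonneg hα]
  gcongr
  rw [abs_le]
  constructor <;> linarith

theorem statement8_general (C₁ C₁' T σ η k : ℝ)
    (hC₁ : 0 < C₁) (hC₁' : 0 < C₁')
    (hσ : 0 < σ) (hη : 0 < η) (hk : 0 < k)
    (qbar : ℕ) :
    letI B : Matrix (Fin (2 * qbar + 1)) (Fin (2 * qbar + 1)) ℝ := fun i j =>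
      if i = j then -C₁ * (((i : ℕ) : ℝ) - (qbar : ℝ)) ^ 2
      else if (i : ℕ) + 1 = (j : ℕ) ∨ (j : ℕ) + 1 = (i : ℕ) then C₁' else 0
    letI u : ℝ → Fin (2 * qbar + 1) → ℝ := fun t =>
      (NormedSpace.exp ((T - t) • B)) *ᵥ (fun _ => 1)
    letI v : ℝ → Fin (2 * qbar + 1) → ℝ := fun t i => -(u t i) ^ (-(σ * η / k))
    ∀ t ∈ Set.Icc (0 : ℝ) T, ∀ i j : Fin (2 * qbar + 1), (i : ℕ) + 1 = (j : ℕ) →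
      (1 / η) * |Real.log (v t i / v t j)|
        ≤ (σ / k) * (2 * C₁' + C₁ * (qbar : ℝ) ^ 2) * T := by
  intro t ht i j _
  -- the index `i` encodes `q = i - q̄`
  set d : Fin (2 * qbar + 1) → ℝ := fun i => -C₁ * (((i : ℕ) : ℝ) - (qbar : ℝ)) ^ 2
  have hdiag : ∀ i, -(C₁ * (qbar : ℝ) ^ 2) ≤ symmTridiagonal d C₁' i i := by
    intro i
    have hi : ((i : ℕ) : ℝ) ≤ 2 * qbar := by exact_mod_cast Nat.lt_succ_iff.mp i.isLt
    have hsq : (((i : ℕ) : ℝ) - qbar) ^ 2 ≤ (qbar : ℝ) ^ 2 :=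
      sq_le_sq' (by linarith [Nat.cast_nonneg (α := ℝ) (i : ℕ)]) (by linarith)
    rw [symmTridiagonal_apply_self]
    show _ ≤ -C₁ * (((i : ℕ) : ℝ) - qbar) ^ 2
    rw [neg_mul]
    exact neg_le_neg (mul_le_mul_of_nonneg_left hsq hC₁.le)
  have hu := Matrix.exp_smul_mulVec_one_apply_mem_Icc
    (fun _ _ => symmTridiagonal_apply_nonneg_of_ne hC₁'.le) hdiag
    (sum_symmTridiagonal_apply_le
      (fun _ => mul_nonpos_of_nonpos_of_nonneg (neg_nonpos.2 hC₁.le) (sq_nonneg _)) hC₁'.le)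
    (sub_nonneg.2 ht.2)
  calc _ ≤ (1 / η) * (σ * η / k * (C₁ * qbar ^ 2 * (T - t) + 2 * C₁' * (T - t))) := by
        gcongr
        exact abs_log_neg_rpow_div_neg_rpow_le (by positivity) (hu i) (hu j)
    _ = (σ / k) * (2 * C₁' + C₁ * (qbar : ℝ) ^ 2) * (T - t) := by field_simp; ring
    _ ≤ (σ / k) * (2 * C₁' + C₁ * (qbar : ℝ) ^ 2) * T := by gcongr; linarith [ht.1]

/-- Proposition 4.1, second assertion: with `u(t,q) = (e^{(T−t)B}𝟏)_q` and
`v = −u^{−ση/k}`, the logarithmic increments of `v` satisfy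
`(1/η)·|log(v(t,q)/v(t,q+1))| ≤ (σ/k)·(2C'₁ + C₁q̄²)·T`. -/
theorem statement8 (C₁ C₁' T σ η k : ℝ)
    (hC₁ : 0 < C₁) (hC₁' : 0 < C₁') (hT : 0 < T)
    (hσ : 0 < σ) (hη : 0 < η) (hk : 0 < k)
    (qbar : ℕ) (hqbar : 1 ≤ qbar) :
    letI B : Matrix (Fin (2 * qbar + 1)) (Fin (2 * qbar + 1)) ℝ := fun i j =>
      if i = j then -C₁ * (((i : ℕ) : ℝ) - (qbar : ℝ)) ^ 2
      else if (i : ℕ) + 1 = (j : ℕ) ∨ (j : ℕ) + 1 = (i : ℕ) then C₁' else 0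
    letI u : ℝ → Fin (2 * qbar + 1) → ℝ := fun t =>
      (NormedSpace.exp ((T - t) • B)) *ᵥ (fun _ => 1)
    letI v : ℝ → Fin (2 * qbar + 1) → ℝ := fun t i => -(u t i) ^ (-(σ * η / k))
    ∀ t ∈ Set.Icc (0 : ℝ) T, ∀ i j : Fin (2 * qbar + 1), (i : ℕ) + 1 = (j : ℕ) →
      (1 / η) * |Real.log (v t i / v t j)|
        ≤ (σ / k) * (2 * C₁' + C₁ * (qbar : ℝ) ^ 2) * T :=
  statement8_general C₁ C₁' T σ η k hC₁ hC₁' hσ hη hk qbar
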